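/- arXiv:1809.07372 — 5 statements merged into one kernel-verified Lean document; each statement's English description precedes it below -/
import Mathlib

section
/- The determinant of the Vieta matrix of n complex numbers a_1, …, a_n equals the product ∏_{1 ≤ i < k ≤ n} (a_i − a_k). -/
/-!
Let `W` be the matrix whose `l`-th row is `((-1)^i a_l^(n-1-i))_i`. By Vieta's formulas
the `(l, j)` entry of `W * V` is `∏_{k ≠ j} (a_l - a_k)`, so `W * V` is diagonal with
determinant `∏_j ∏_{k ≠ j} (a_j - a_k) = ± P²`, where `P = ∏_{i < k} (a_i - a_k)`. On the
other hand `W` is a reversed Vandermonde matrix with alternating column signs, so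
`det W = ± P` with the same sign. Hence `det V = P` when `P ≠ 0`; when `P = 0` two of the
`a_i` coincide and `V` has two equal columns.
-/

open Finset Matrix Polynomial

/-- The Vieta matrix of `a : Fin n → ℂ`: its `(i, j)` entry is the elementary
symmetric polynomial of degree `i` evaluated at the numbers `a k` for `k ≠ j`. -/
noncomputable def vietaMatrix (n : ℕ) (a : Fin n → ℂ) : Matrix (Fin n) (Fin n) ℂ :=
  Matrix.of fun i j => ((Finset.univ.erase j).val.map a).esymm i

theorem Multiset.prod_map_sub_eq_sum_esymm {R : Type*} [CommRing R] (s : Multiset R) (x : R) :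
    (s.map (x - ·)).prod =
      ∑ j ∈ Finset.range (Multiset.card s + 1),
        (-1) ^ j * s.esymm j * x ^ (Multiset.card s - j) := by
  simpa [eval_multiset_prod, eval_finsetSum, mul_assoc] using
    congrArg (eval x) (Multiset.prod_X_sub_X_eq_sum_esymm s)

section

variable {R : Type*} [CommRing R] {n : ℕ}

theorem Fin.prod_prod_erase_sub (a : Fin n → R) :
    ∏ j, ∏ k ∈ univ.erase j, (a j - a k) =
      ((∏ j : Fin n, (-1) ^ (j : ℕ)) * ∏ i, ∏ k ∈ Ioi i, (a i - a k)) *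
        ∏ i, ∏ k ∈ Ioi i, (a i - a k) := by
  have hIio (j : Fin n) :
      ∏ k ∈ Iio j, (a j - a k) = (-1) ^ (j : ℕ) * ∏ k ∈ Iio j, (a k - a j) := by
    rw [← Fin.card_Iio j, ← Finset.prod_const, ← prod_mul_distrib]
    exact prod_congr rfl fun k _ => by ring
  have hswap : ∏ j : Fin n, ∏ k ∈ Iio j, (a k - a j) = ∏ i, ∏ k ∈ Ioi i, (a i - a k) :=
    prod_comm' (by simp)
  calc ∏ j, ∏ k ∈ univ.erase j, (a j - a k)
      = ∏ j, (∏ k ∈ Iio j, (a j - a k)) * ∏ k ∈ Ioi j, (a j - a k) := by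
        refine prod_congr rfl fun j _ => ?_
        rw [← compl_singleton, ← Ioi_disjUnion_Iio, prod_disjUnion, mul_comm]
    _ = _ := by simp_rw [prod_mul_distrib, hIio, prod_mul_distrib, hswap]

def altRevVandermonde (a : Fin n → R) : Matrix (Fin n) (Fin n) R :=
  of fun l i => (-1) ^ (i : ℕ) * projVandermonde 1 a l i

theorem det_altRevVandermonde (a : Fin n → R) :
    (altRevVandermonde a).det =
      (∏ i : Fin n, (-1) ^ (i : ℕ)) * ∏ i, ∏ k ∈ Ioi i, (a i - a k) := by
  simp [altRevVandermonde, det_mul_row, det_projVandermonde]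

end

section

variable {n : ℕ} (a : Fin n → ℂ)

theorem altRevVandermonde_mul_vietaMatrix :
    altRevVandermonde a * vietaMatrix n a =
      diagonal fun j => ∏ k ∈ univ.erase j, (a j - a k) := by
  ext l j
  have hrow :
      (altRevVandermonde a * vietaMatrix n a) l j = ∏ k ∈ univ.erase j, (a l - a k) := by
    set s := (univ.erase j).val.map a
    have hcard : Multiset.card s = n - 1 := by simp [s]
    calc (altRevVandermonde a * vietaMatrix n a) l j
        = ∑ i ∈ Finset.range n, (-1) ^ i * s.esymm i * a l ^ (n - 1 - i) := by
          rw [mul_apply,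
            ← Fin.sum_univ_eq_sum_range fun i => (-1) ^ i * s.esymm i * a l ^ (n - 1 - i)]
          refine sum_congr rfl fun i _ => ?_
          simp only [altRevVandermonde, vietaMatrix, projVandermonde_apply, of_apply, Pi.one_apply,
            one_pow, one_mul, Fin.val_rev, Nat.sub_sub, add_comm 1]
          ring
      _ = (s.map (a l - ·)).prod := by
          rw [Multiset.prod_map_sub_eq_sum_esymm, hcard, Nat.sub_add_cancel j.pos]
      _ = ∏ k ∈ univ.erase j, (a l - a k) := by rw [Multiset.map_map]; rfl
  rw [hrow]
  rcases eq_or_ne l j with rfl | hlj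
  · simp
  · rw [diagonal_apply_ne _ hlj]
    exact prod_eq_zero (mem_erase.2 ⟨hlj, mem_univ l⟩) (sub_self _)

theorem det_vietaMatrix_eq_zero_of_eq {i k : Fin n} (hik : i ≠ k) (h : a i = a k) :
    (vietaMatrix n a).det = 0 :=
  det_zero_of_column_eq hik fun r => by
    simp only [vietaMatrix, of_apply, erase_val, Multiset.map_erase_of_mem _ _ (mem_univ _), h]

end

theorem vieta_det_general (n : ℕ) (a : Fin n → ℂ) :
    (vietaMatrix n a).det = ∏ i : Fin n, ∏ k ∈ Finset.Ioi i, (a i - a k) := by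
  set P := ∏ i : Fin n, ∏ k ∈ Finset.Ioi i, (a i - a k)
  by_cases hP : P = 0
  · obtain ⟨i, -, k, hk, hik⟩ : ∃ i ∈ univ, ∃ k ∈ Ioi i, a i - a k = 0 := by
      simpa [P, prod_eq_zero_iff] using hP
    rw [hP, det_vietaMatrix_eq_zero_of_eq a (mem_Ioi.1 hk).ne (sub_eq_zero.1 hik)]
  · have h := congrArg det (altRevVandermonde_mul_vietaMatrix a)
    rw [det_mul, det_diagonal, det_altRevVandermonde, Fin.prod_prod_erase_sub] at h
    refine mul_left_cancel₀ (mul_ne_zero ?_ hP) h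
    exact prod_ne_zero_iff.2 fun i _ => pow_ne_zero _ (neg_ne_zero.2 one_ne_zero)

theorem vieta_det (n : ℕ) (hn : 1 ≤ n) (a : Fin n → ℂ) :
    (vietaMatrix n a).det = ∏ i : Fin n, ∏ k ∈ Finset.Ioi i, (a i - a k) :=
  vieta_det_general n a
end

section
/- For complex numbers a_1, …, a_n, the determinant of the (n+1)×(n+1) Vieta matrix of the n+1 numbers a_1, …, a_n, 0 equals (a_1 a_2 ⋯ a_n) times the determinant of the n×n Vieta matrix of a_1, …, a_n. -/
namespace Multiset

variable {R : Type*} [CommSemiring R]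

theorem esymm_cons_succ (x : R) (s : Multiset R) (k : ℕ) :
    (x ::ₘ s).esymm (k + 1) = s.esymm (k + 1) + x * s.esymm k := by
  simp only [esymm, powersetCard_cons, map_add, sum_add, map_map, Function.comp_def, prod_cons,
    sum_map_mul_left]

theorem esymm_zero_cons (s : Multiset R) (k : ℕ) : ((0 : R) ::ₘ s).esymm k = s.esymm k := by
  cases k with
  | zero => simp [esymm]
  | succ k => rw [esymm_cons_succ, zero_mul, add_zero]

end Multiset

theorem Finset.esymm_map_val_card {α R : Type*} [CommSemiring R] (f : α → R) (s : Finset α) :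
    (s.val.map f).esymm s.card = ∏ i ∈ s, f i := by
  rw [Finset.esymm_map_val, Finset.powersetCard_self, Finset.sum_singleton]

namespace Fin

theorem univ_val_eq_last_cons (n : ℕ) :
    (Finset.univ : Finset (Fin (n + 1))).val = last n ::ₘ Finset.univ.val.map castSucc := by
  rw [univ_castSuccEmb]
  rfl

variable {α : Type*} {n : ℕ}

theorem map_snoc_erase_castSucc (a : Fin n → α) (x : α) (j : Fin n) :
    (Finset.univ.erase j.castSucc).val.map (snoc a x : Fin (n + 1) → α)
      = x ::ₘ (Finset.univ.erase j).val.map a := by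
  rw [Finset.erase_val, Finset.erase_val, univ_val_eq_last_cons,
    Multiset.erase_cons_tail _ (castSucc_lt_last j).ne',
    ← Multiset.map_erase _ (castSucc_injective n), Multiset.map_cons, snoc_last, Multiset.map_map]
  simp only [Function.comp_def, snoc_castSucc]

end Fin

namespace Matrix

theorem det_eq_mul_det_submatrix_castSucc_of_last_row {R : Type*} [CommRing R] {n : ℕ}
    (M : Matrix (Fin (n + 1)) (Fin (n + 1)) R) (h : ∀ j : Fin n, M (Fin.last n) j.castSucc = 0) :
    M.det = M (Fin.last n) (Fin.last n) * (M.submatrix Fin.castSucc Fin.castSucc).det := by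
  rw [det_succ_row M (Fin.last n), Fin.sum_univ_castSucc]
  simp [h, Fin.succAbove_last]

end Matrix

theorem vietaMatrix_apply (n : ℕ) (a : Fin n → ℂ) (i j : Fin n) :
    vietaMatrix n a i j = ((Finset.univ.erase j).val.map a).esymm i := rfl

theorem vietaMatrix_last_row (n : ℕ) (b : Fin (n + 1) → ℂ) (j : Fin (n + 1)) :
    vietaMatrix (n + 1) b (Fin.last n) j = ∏ k ∈ Finset.univ.erase j, b k := by
  rw [vietaMatrix_apply, ← Finset.esymm_map_val_card]
  simp [Finset.card_erase_of_mem]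

theorem vietaMatrix_snoc_zero_last_castSucc (n : ℕ) (a : Fin n → ℂ) (j : Fin n) :
    vietaMatrix (n + 1) (Fin.snoc a 0) (Fin.last n) j.castSucc = 0 := by
  rw [vietaMatrix_last_row]
  exact Finset.prod_eq_zero (by simp [(Fin.castSucc_lt_last j).ne']) (Fin.snoc_last _ _)

theorem vietaMatrix_snoc_zero_last_last (n : ℕ) (a : Fin n → ℂ) :
    vietaMatrix (n + 1) (Fin.snoc a 0) (Fin.last n) (Fin.last n) = ∏ i : Fin n, a i := by
  rw [vietaMatrix_last_row, Fin.univ_castSuccEmb, Finset.erase_cons, Finset.prod_map]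
  simp

theorem vietaMatrix_snoc_zero_submatrix_castSucc (n : ℕ) (a : Fin n → ℂ) :
    (vietaMatrix (n + 1) (Fin.snoc a 0)).submatrix Fin.castSucc Fin.castSucc = vietaMatrix n a := by
  ext i j
  rw [Matrix.submatrix_apply, vietaMatrix_apply, Fin.map_snoc_erase_castSucc,
    Multiset.esymm_zero_cons, Fin.val_castSucc, vietaMatrix_apply]

theorem vieta_det_snoc_zero_general (n : ℕ) (a : Fin n → ℂ) :
    (vietaMatrix (n + 1) (Fin.snoc a 0)).det
      = (∏ i : Fin n, a i) * (vietaMatrix n a).det := by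
  rw [Matrix.det_eq_mul_det_submatrix_castSucc_of_last_row _
      (vietaMatrix_snoc_zero_last_castSucc n a),
    vietaMatrix_snoc_zero_last_last, vietaMatrix_snoc_zero_submatrix_castSucc]

theorem vieta_det_snoc_zero (n : ℕ) (hn : 1 ≤ n) (a : Fin n → ℂ) :
    (vietaMatrix (n + 1) (Fin.snoc a 0)).det
      = (∏ i : Fin n, a i) * (vietaMatrix n a).det :=
  vieta_det_snoc_zero_general n a
end

section
/- For fixed complex numbers a_1, …, a_n, the function f : ℂ → ℂ sending x to the determinant of the (n+1)×(n+1) Vieta matrix of the n+1 numbers a_1, …, a_n, x is given by a polynomial in x of degree at most n, i.e. there exists a polynomial p ∈ ℂ[X] with deg p ≤ n such that f(x) = p(x) for all x ∈ ℂ; moreover f(a_m) = 0 for every m ∈ {1, …, n}. -/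
open Polynomial Finset

theorem Finset.cons_map_val_erase {ι α : Type*} [DecidableEq ι] (f : ι → α) {s : Finset ι}
    {j : ι} (hj : j ∈ s) : f j ::ₘ (s.erase j).val.map f = s.val.map f := by
  rw [← Multiset.map_cons, erase_val, Multiset.cons_erase (mem_val.mpr hj)]

namespace Matrix

variable {R S : Type*} [CommRing R] [CommRing S] {n : ℕ}

noncomputable def vieta (b : Fin n → R) : Matrix (Fin n) (Fin n) R :=
  of fun i j => ((univ.erase j).val.map b).esymm i

theorem vieta_apply (b : Fin n → R) (i j : Fin n) :
    vieta b i j = ∑ t ∈ (univ.erase j).powersetCard i, ∏ k ∈ t, b k :=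
  esymm_map_val b (univ.erase j) i

theorem vieta_col_eq {b : Fin n → R} {j j' : Fin n} (h : b j = b j') (i : Fin n) :
    vieta b i j = vieta b i j' := by
  have : (univ.erase j).val.map b = (univ.erase j').val.map b := by
    rw [← Multiset.cons_inj_right (b j), cons_map_val_erase _ (mem_univ j), h,
      cons_map_val_erase _ (mem_univ j')]
  simp only [vieta, of_apply, this]

theorem vieta_comp (f : R →+* S) (b : Fin n → R) : vieta (f ∘ b) = (vieta b).map f := by
  ext i j
  simp [vieta_apply, map_sum, map_prod]

end Matrix

theorem vietaMatrix_eq_vieta {n : ℕ} (a : Fin n → ℂ) : vietaMatrix n a = Matrix.vieta a := rfl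

namespace Polynomial

variable {R : Type*} [CommRing R] {ι : Type*} [Fintype ι] [DecidableEq ι]

theorem natDegree_det_le_of_forall_le {M : Matrix ι ι R[X]} (d : ι → ℕ)
    (h : ∀ i j, (M i j).natDegree ≤ d j) : M.det.natDegree ≤ ∑ j, d j := by
  rw [Matrix.det_apply]
  refine natDegree_sum_le_of_forall_le _ _ fun σ _ => (natDegree_smul_le _ _).trans ?_
  exact (natDegree_prod_le _ _).trans (sum_le_sum fun j _ => h (σ j) j)

theorem natDegree_vieta_apply_le {n : ℕ} (b : Fin n → R[X]) (i j : Fin n) :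
    (Matrix.vieta b i j).natDegree ≤ ∑ k ∈ univ.erase j, (b k).natDegree := by
  rw [Matrix.vieta_apply]
  refine natDegree_sum_le_of_forall_le _ _ fun t ht => (natDegree_prod_le _ _).trans ?_
  exact sum_le_sum_of_subset (mem_powersetCard.mp ht).1

theorem natDegree_det_vieta_le {n : ℕ} (b : Fin n → R[X]) :
    (Matrix.vieta b).det.natDegree ≤ (n - 1) * ∑ k, (b k).natDegree := by
  refine (natDegree_det_le_of_forall_le _ (natDegree_vieta_apply_le b)).trans_eq ?_
  have hsum : ∑ j, ∑ k ∈ univ.erase j, (b k).natDegree + ∑ j, (b j).natDegree =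
      n * ∑ k, (b k).natDegree := by
    simp only [← sum_add_distrib, add_comm _ (b _).natDegree,
      add_sum_erase _ (fun k => (b k).natDegree) (mem_univ _), sum_const, card_univ,
      Fintype.card_fin, smul_eq_mul]
  rw [Nat.sub_one_mul]
  omega

end Polynomial

open Matrix in
theorem vieta_det_snoc_polynomial_general (n : ℕ) (a : Fin n → ℂ)
    (f : ℂ → ℂ) (hf : ∀ x : ℂ, f x = (vietaMatrix (n + 1) (Fin.snoc a x)).det) :
    (∃ p : Polynomial ℂ, p.degree ≤ n ∧ ∀ x : ℂ, f x = p.eval x) ∧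
      ∀ m : Fin n, f (a m) = 0 := by
  set b : Fin (n + 1) → ℂ[X] := Fin.snoc (fun k => C (a k)) X
  have heval (x : ℂ) : eval x ∘ b = Fin.snoc a x := by
    funext k
    induction k using Fin.lastCases <;> simp [b]
  have hdeg : ∑ k, (b k).natDegree = 1 := by simp [b, Fin.sum_univ_castSucc]
  refine ⟨⟨(vieta b).det, ?_, fun x => ?_⟩, fun m => ?_⟩
  · refine degree_le_of_natDegree_le ((natDegree_det_vieta_le b).trans ?_)
    simp [hdeg]
  · rw [hf, vietaMatrix_eq_vieta, ← heval, ← coe_evalRingHom, vieta_comp, RingHom.map_det,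
      RingHom.mapMatrix_apply]
  · rw [hf]
    exact det_zero_of_column_eq (Fin.castSucc_lt_last m).ne (vieta_col_eq (by simp))

theorem vieta_det_snoc_polynomial (n : ℕ) (hn : 1 ≤ n) (a : Fin n → ℂ)
    (f : ℂ → ℂ) (hf : ∀ x : ℂ, f x = (vietaMatrix (n + 1) (Fin.snoc a x)).det) :
    (∃ p : Polynomial ℂ, p.degree ≤ n ∧ ∀ x : ℂ, f x = p.eval x) ∧
      ∀ m : Fin n, f (a m) = 0 :=
  vieta_det_snoc_polynomial_general n a f hf
end

section
/- Let a_1, …, a_n be complex numbers and for each j ∈ {1, …, n} let p_j(x) = ∏_{i ≠ j} (x − a_i) ∈ ℂ[X]. Then the Wronskian determinant of p_1, …, p_n, namely the determinant of the n×n matrix whose (i, j) entry is the i-th derivative p_j^{(i)} for i ∈ {0, 1, …, n−1}, is the constant polynomial (∏_{k=0}^{n−1} k!) · ∏_{1 ≤ i < k ≤ n} (a_i − a_k). -/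
/-!
The Wronskian matrix of polynomials of degree `< n` is the Wronskian matrix of `1, X, …, X^(n-1)`,
upper triangular with diagonal `0!, …, (n-1)!`, times the constant matrix of their coefficients.
For `p j = ∏_{l ≠ j} (X - a l)`, the Vandermonde matrix of `a` times that coefficient matrix is
the diagonal matrix of the values `p j (a j) = ∏_{l ≠ j} (a j - a l)`, whose determinant is
`det (vandermonde a) * det (vandermonde (-a))`. Cancelling `det (vandermonde a)` when the `a i` are
distinct leaves `det (vandermonde (-a)) = ∏_{i < k} (a i - a k)`; otherwise two of the `p j`
coincide and both sides vanish.
-/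

open Polynomial Matrix Finset Lagrange
open scoped Nat

noncomputable section

namespace Polynomial

variable {R : Type*} [CommRing R] {n : ℕ}

def wronskianMatrix (q : Fin n → R[X]) : Matrix (Fin n) (Fin n) R[X] :=
  Matrix.of fun i j => derivative^[i] (q j)

def coeffMatrix (q : Fin n → R[X]) : Matrix (Fin n) (Fin n) R :=
  Matrix.of fun k j => (q j).coeff k

lemma wronskianMatrix_eq_mul_coeffMatrix {q : Fin n → R[X]} (hq : ∀ j, (q j).natDegree < n) :
    wronskianMatrix q
      = wronskianMatrix (fun k : Fin n => X ^ (k : ℕ)) * (coeffMatrix q).map C := by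
  refine Matrix.ext fun i j => ?_
  have hexpand : q j = ∑ k : Fin n, C ((q j).coeff k) * X ^ (k : ℕ) := by
    simp_rw [C_mul_X_pow_eq_monomial]
    rw [Fin.sum_univ_eq_sum_range (fun k => monomial k ((q j).coeff k))]
    exact as_sum_range' _ _ (hq j)
  simp only [wronskianMatrix, coeffMatrix, mul_apply, map_apply, of_apply]
  conv_lhs => rw [hexpand, iterate_derivative_sum]
  simp only [iterate_derivative_C_mul]
  exact sum_congr rfl fun k _ => mul_comm _ _

lemma isUpperTriangular_wronskianMatrix_X_pow :
    (wronskianMatrix fun k : Fin n => (X ^ (k : ℕ) : R[X])).IsUpperTriangular := by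
  intro i k hki
  have hzero : (k : ℕ).descFactorial i = 0 := Nat.descFactorial_eq_zero_iff_lt.mpr hki
  simp [wronskianMatrix, iterate_derivative_X_pow_eq_C_mul, hzero]

lemma det_wronskianMatrix_X_pow :
    (wronskianMatrix fun k : Fin n => (X ^ (k : ℕ) : R[X])).det
      = C (∏ k ∈ range n, (k ! : R)) := by
  rw [det_of_isUpperTriangular isUpperTriangular_wronskianMatrix_X_pow,
    ← Fin.prod_univ_eq_prod_range (fun k => (k ! : R)), map_prod]
  simp [wronskianMatrix, iterate_derivative_X_pow_eq_C_mul, Nat.descFactorial_self]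

lemma det_wronskianMatrix_of_natDegree_lt {q : Fin n → R[X]} (hq : ∀ j, (q j).natDegree < n) :
    (wronskianMatrix q).det = C ((∏ k ∈ range n, (k ! : R)) * (coeffMatrix q).det) := by
  rw [wronskianMatrix_eq_mul_coeffMatrix hq, det_mul, det_wronskianMatrix_X_pow,
    C_mul, RingHom.map_det]
  rfl

lemma vandermonde_mul_coeffMatrix {q : Fin n → R[X]} (hq : ∀ j, (q j).natDegree < n)
    (a : Fin n → R) : vandermonde a * coeffMatrix q = Matrix.of fun i j => (q j).eval (a i) := by
  ext i j
  rw [of_apply, eval_eq_sum_range' (hq j),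
    ← Fin.sum_univ_eq_sum_range (fun k => (q j).coeff k * a i ^ k)]
  simp only [mul_apply, vandermonde_apply, coeffMatrix, of_apply, mul_comm]

end Polynomial

namespace Matrix

variable {R : Type*} [CommRing R] {n : ℕ}

lemma det_vandermonde_neg (a : Fin n → R) :
    (vandermonde (-a)).det = ∏ i : Fin n, ∏ k ∈ Ioi i, (a i - a k) := by
  simp only [det_vandermonde, Pi.neg_apply, neg_sub_neg]

lemma prod_prod_erase_sub_eq_det_vandermonde_mul_det_vandermonde_neg (a : Fin n → R) :
    ∏ j : Fin n, ∏ l ∈ univ.erase j, (a j - a l)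
      = (vandermonde a).det * (vandermonde (-a)).det := by
  have hsplit (j : Fin n) : ∏ l ∈ univ.erase j, (a j - a l)
      = (∏ l ∈ Iio j, (a j - a l)) * ∏ l ∈ Ioi j, (a j - a l) := by
    rw [← Finset.compl_singleton, ← Ioi_disjUnion_Iio, prod_disjUnion, mul_comm]
  rw [prod_congr rfl fun j _ => hsplit j, prod_mul_distrib, det_vandermonde, det_vandermonde_neg]
  congr 1
  exact prod_comm' (by simp)

end Matrix

namespace Lagrange

variable {R : Type*} [CommRing R] {n : ℕ}

lemma natDegree_nodal_erase_lt [Nontrivial R] (a : Fin n → R) (j : Fin n) :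
    (nodal (univ.erase j) a).natDegree < n := by
  rw [natDegree_nodal, card_erase_of_mem (mem_univ j), card_univ, Fintype.card_fin]
  exact Nat.sub_lt j.pos one_pos

lemma nodal_erase_eq_of_eq {a : Fin n → R} {i j : Fin n} (hij : a i = a j) :
    nodal (univ.erase i) a = nodal (univ.erase j) a := by
  rcases eq_or_ne i j with rfl | hne
  · rfl
  rw [nodal_eq_mul_nodal_erase (mem_erase.mpr ⟨hne.symm, mem_univ j⟩),
    nodal_eq_mul_nodal_erase (s := univ.erase j) (mem_erase.mpr ⟨hne, mem_univ i⟩),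
    erase_right_comm, hij]

lemma vandermonde_mul_coeffMatrix_nodal_erase [Nontrivial R] (a : Fin n → R) :
    vandermonde a * coeffMatrix (fun j => nodal (univ.erase j) a)
      = diagonal fun j => ∏ l ∈ univ.erase j, (a j - a l) := by
  rw [vandermonde_mul_coeffMatrix (natDegree_nodal_erase_lt a)]
  ext i j
  rcases eq_or_ne i j with rfl | hne
  · simp [eval_nodal]
  · simp [diagonal_apply_ne _ hne, eval_nodal_at_node (mem_erase.mpr ⟨hne, mem_univ i⟩)]

lemma det_coeffMatrix_nodal_erase [IsDomain R] (a : Fin n → R) :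
    (coeffMatrix fun j => nodal (univ.erase j) a).det
      = ∏ i : Fin n, ∏ k ∈ Ioi i, (a i - a k) := by
  rw [← det_vandermonde_neg]
  by_cases ha : Function.Injective a
  · refine mul_left_cancel₀ (det_vandermonde_ne_zero_iff.mpr ha) ?_
    rw [← det_mul, vandermonde_mul_coeffMatrix_nodal_erase, det_diagonal,
      prod_prod_erase_sub_eq_det_vandermonde_mul_det_vandermonde_neg]
  · obtain ⟨i, j, hij, hne⟩ : ∃ i j, a i = a j ∧ i ≠ j := by
      simpa [Function.Injective] using ha
    have hcol (k : Fin n) : coeffMatrix (fun j => nodal (univ.erase j) a) k i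
        = coeffMatrix (fun j => nodal (univ.erase j) a) k j := by
      simp only [coeffMatrix, of_apply, nodal_erase_eq_of_eq hij]
    rw [det_zero_of_column_eq hne hcol,
      det_vandermonde_eq_zero_iff.mpr ⟨i, j, by simp [hij], hne⟩]

end Lagrange

end

theorem wronskian_of_vieta_polynomials_general (n : ℕ) (a : Fin n → ℂ)
    (p : Fin n → Polynomial ℂ)
    (hp : ∀ j : Fin n, p j = ∏ i ∈ Finset.univ.erase j, (Polynomial.X - Polynomial.C (a i))) :
    (Matrix.of fun i j : Fin n => (Polynomial.derivative^[(i : ℕ)] (p j))).det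
      = Polynomial.C
          ((∏ k ∈ Finset.range n, (Nat.factorial k : ℂ)) *
            ∏ i : Fin n, ∏ k ∈ Finset.Ioi i, (a i - a k)) := by
  obtain rfl : p = fun j => nodal (univ.erase j) a :=
    funext fun j => (hp j).trans (nodal_eq _ _).symm
  rw [← det_coeffMatrix_nodal_erase]
  exact det_wronskianMatrix_of_natDegree_lt (natDegree_nodal_erase_lt a)

theorem wronskian_of_vieta_polynomials (n : ℕ) (hn : 1 ≤ n) (a : Fin n → ℂ)
    (p : Fin n → Polynomial ℂ)
    (hp : ∀ j : Fin n, p j = ∏ i ∈ Finset.univ.erase j, (Polynomial.X - Polynomial.C (a i))) :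
    (Matrix.of fun i j : Fin n => (Polynomial.derivative^[(i : ℕ)] (p j))).det
      = Polynomial.C
          ((∏ k ∈ Finset.range n, (Nat.factorial k : ℂ)) *
            ∏ i : Fin n, ∏ k ∈ Finset.Ioi i, (a i - a k)) :=
  wronskian_of_vieta_polynomials_general n a p hp
end

section
/- Let e_1, …, e_n denote the elementary symmetric polynomials in the variables X_1, …, X_n over ℂ, where e_i has degree i. Then the Jacobian determinant of (e_1, …, e_n), namely the determinant of the n×n matrix whose (i, j) entry is the partial derivative ∂e_i/∂X_j, equals ∏_{1 ≤ i < k ≤ n} (X_i − X_k) as a multivariate polynomial. -/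
/-!
Left-multiply the Jacobian `J = (∂ⱼ e_{i+1})` by `M = ((-X_l) ^ (n - 1 - i))_{l,i}`.
Since `∂ⱼ e_{m+1}` is the `m`-th elementary symmetric polynomial of the variables other than `X_j`,
Vieta's formula for `∏_{k ≠ j} (t + X_k)` at `t = -X_l` shows that `M * J` is diagonal with
entries `∏_{k ≠ j} (X_k - X_j)`. Now `M` is a projective Vandermonde matrix of determinant
`∏_{i<j} (X_j - X_i)`, and the diagonal determinant is `∏_{i<j} (X_j - X_i) (X_i - X_j)`;
cancelling the nonzero factor `∏_{i<j} (X_j - X_i)` leaves the claim.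
-/

open MvPolynomial Finset Matrix

section PDerivEsymm

variable {σ R : Type*} [DecidableEq σ] [CommSemiring R]

theorem pderiv_prod_X_of_notMem {j : σ} {s : Finset σ} (h : j ∉ s) :
    pderiv j (∏ i ∈ s, X i : MvPolynomial σ R) = 0 := by
  induction s using Finset.induction_on with
  | empty => simp
  | insert a s ha ih =>
    rw [prod_insert ha, pderiv_mul, ih (fun hj => h (mem_insert_of_mem hj)),
      pderiv_X_of_ne (by rintro rfl; exact h (mem_insert_self _ _))]
    simp

theorem pderiv_prod_X (j : σ) (s : Finset σ) :
    pderiv j (∏ i ∈ s, X i : MvPolynomial σ R) = if j ∈ s then ∏ i ∈ s.erase j, X i else 0 := by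
  split_ifs with h
  · rw [← insert_erase h, prod_insert (notMem_erase j s), pderiv_mul, pderiv_X_self,
      pderiv_prod_X_of_notMem (notMem_erase j s), erase_insert (notMem_erase j s)]
    simp
  · exact pderiv_prod_X_of_notMem h

variable [Fintype σ]

theorem pderiv_esymm_succ (j : σ) (m : ℕ) :
    pderiv j (esymm σ R (m + 1)) = ∑ t ∈ ({j}ᶜ : Finset σ).powersetCard m, ∏ i ∈ t, X i := by
  simp only [esymm, map_sum, pderiv_prod_X, sum_ite, sum_const_zero, add_zero]
  refine sum_nbij' (·.erase j) (insert j) ?_ ?_ ?_ ?_ ?_ <;>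
    intro t ht <;> grind [subset_compl_singleton]

theorem prod_compl_add_X_eq_sum_pderiv_esymm (j : σ) (a : MvPolynomial σ R) :
    ∏ k ∈ {j}ᶜ, (a + X k) = ∑ m ∈ range (Fintype.card σ),
      pderiv j (esymm σ R (m + 1)) * a ^ (Fintype.card σ - (m + 1)) := by
  have hcard : #({j}ᶜ : Finset σ) = Fintype.card σ - 1 := by rw [card_compl, card_singleton]
  have vieta := congrArg (Polynomial.eval a)
    (Multiset.prod_X_add_C_eq_sum_esymm (({j}ᶜ : Finset σ).val.map X))
  simp only [Polynomial.eval_multiset_prod, Polynomial.eval_finsetSum, Multiset.map_map,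
    Function.comp_def, Polynomial.eval_add, Polynomial.eval_X, Polynomial.eval_C,
    Polynomial.eval_mul, Polynomial.eval_pow, Multiset.card_map, card_val, esymm_map_val,
    ← pderiv_esymm_succ, hcard, Nat.sub_add_cancel (Fintype.card_pos_iff.2 ⟨j⟩), Nat.sub_sub,
    Nat.add_comm 1] at vieta
  exact vieta

end PDerivEsymm

noncomputable def esymmJacobian (R : Type*) [CommSemiring R] (n : ℕ) :
    Matrix (Fin n) (Fin n) (MvPolynomial (Fin n) R) :=
  .of fun i j => pderiv j (esymm (Fin n) R (i + 1))

section EsymmJacobian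

variable {R : Type*} [CommRing R] {n : ℕ}

theorem projVandermonde_mul_esymmJacobian :
    projVandermonde 1 (fun l => -X l) * esymmJacobian R n =
      diagonal fun j => ∏ k ∈ {j}ᶜ, (X k - X j) := by
  refine Matrix.ext fun l j => ?_
  have vieta := prod_compl_add_X_eq_sum_pderiv_esymm j (-X l : MvPolynomial (Fin n) R)
  rw [Fintype.card_fin, ← Fin.sum_univ_eq_sum_range
    (fun m => pderiv j (esymm (Fin n) R (m + 1)) * (-X l) ^ (n - (m + 1)))] at vieta
  simp only [mul_apply, projVandermonde_apply, esymmJacobian, of_apply, Pi.one_apply, one_pow,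
    one_mul, Fin.val_rev, mul_comm ((-X l : MvPolynomial (Fin n) R) ^ _)]
  simp only [← vieta, neg_add_eq_sub]
  rcases eq_or_ne l j with rfl | hlj
  · rw [diagonal_apply_eq]
  · rw [diagonal_apply_ne _ hlj]
    exact prod_eq_zero (i := l) (by simpa using hlj) (sub_self _)

theorem det_projVandermonde_one_neg_X :
    (projVandermonde 1 (fun l => -X l) : Matrix (Fin n) (Fin n) (MvPolynomial (Fin n) R)).det =
      ∏ i : Fin n, ∏ j ∈ Ioi i, (X j - X i) := by
  simp [det_projVandermonde, neg_add_eq_sub]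

theorem det_diagonal_prod_compl_X_sub_X :
    (diagonal fun j : Fin n => ∏ k ∈ {j}ᶜ, (X k - X j : MvPolynomial (Fin n) R)).det =
      (∏ i : Fin n, ∏ j ∈ Ioi i, (X j - X i)) * ∏ i : Fin n, ∏ j ∈ Ioi i, (X i - X j) := by
  rw [det_diagonal, ← prod_prod_Ioi_mul_eq_prod_prod_off_diag, ← prod_mul_distrib]
  simp_rw [prod_mul_distrib]

theorem prod_prod_Ioi_X_sub_X_ne_zero [IsDomain R] :
    ∏ i : Fin n, ∏ j ∈ Ioi i, (X j - X i : MvPolynomial (Fin n) R) ≠ 0 :=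
  prod_ne_zero_iff.2 fun _ _ => prod_ne_zero_iff.2 fun _ hj =>
    sub_ne_zero.2 fun h => (mem_Ioi.1 hj).ne' (X_injective h)

theorem det_esymmJacobian [IsDomain R] :
    (esymmJacobian R n).det = ∏ i : Fin n, ∏ j ∈ Ioi i, (X i - X j) := by
  have h := congrArg det (projVandermonde_mul_esymmJacobian (R := R) (n := n))
  rw [det_mul, det_projVandermonde_one_neg_X, det_diagonal_prod_compl_X_sub_X] at h
  exact mul_left_cancel₀ prod_prod_Ioi_X_sub_X_ne_zero h

end EsymmJacobian

theorem jacobian_esymm_general (n : ℕ) :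
    (Matrix.of fun i j : Fin n =>
        MvPolynomial.pderiv j (MvPolynomial.esymm (Fin n) ℂ ((i : ℕ) + 1))).det
      = ∏ i : Fin n, ∏ k ∈ Finset.Ioi i,
          (MvPolynomial.X i - MvPolynomial.X k : MvPolynomial (Fin n) ℂ) :=
  det_esymmJacobian

theorem jacobian_esymm (n : ℕ) (hn : 1 ≤ n) :
    (Matrix.of fun i j : Fin n =>
        MvPolynomial.pderiv j (MvPolynomial.esymm (Fin n) ℂ ((i : ℕ) + 1))).det
      = ∏ i : Fin n, ∏ k ∈ Finset.Ioi i,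
          (MvPolynomial.X i - MvPolynomial.X k : MvPolynomial (Fin n) ℂ) :=
  jacobian_esymm_general n
end
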